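/- Let Ω be a uniform domain with admissible Whitney covering W, 0 < s < 1, 1 ≤ p < ∞, and f ∈ L¹_loc(Ω). Then the quantity ( Σ_{Q∈W} ∫_Q sup_{y∈Sh(Q)} |f(x)−f(y)|^p / |x−y|^{sp} dx )^{1/p} is comparable, with constants depending on d, s, p and the uniformity constants, to ( ∫_Ω (ess sup_{y∈Ω} |f(x)−f(y)| / |x−y|^{s})^p dx )^{1/p}. -/

import Mathlib

open MeasureTheory ENNReal

/-- An axis-parallel cube in `ℝ^d`, identified with the closed ball of radius `side/2`
around its center in the sup metric on `Fin d → ℝ`. -/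
structure Cube (d : ℕ) where
  center : Fin d → ℝ
  side : ℝ
  side_pos : 0 < side

/-- The set of points of a cube. -/
def Cube.toSet {d : ℕ} (Q : Cube d) : Set (Fin d → ℝ) :=
  Metric.closedBall Q.center (Q.side / 2)

/-- Distance between two sets. -/
noncomputable def setDist {d : ℕ} (A B : Set (Fin d → ℝ)) : ℝ :=
  sInf (Set.image2 dist A B)

/-- The long distance `D(Q,S) = ℓ(Q) + ℓ(S) + dist(Q,S)` between two cubes. -/
noncomputable def longDist {d : ℕ} (Q S : Cube d) : ℝ :=
  Q.side + S.side + setDist Q.toSet S.toSet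

/-- A Whitney covering of `Ω`: a family of essentially disjoint (dyadic-type) cubes whose
union is `Ω`, with side-lengths comparable to the distance to `∂Ω`, and finite
superposition of the dilated cubes `50Q`. -/
structure WhitneyCovering (d : ℕ) (Ω : Set (Fin d → ℝ)) where
  cubes : Set (Cube d)
  covers : (⋃ Q ∈ cubes, Q.toSet) = Ω
  essDisjoint : ∀ Q ∈ cubes, ∀ S ∈ cubes, Q ≠ S →
    interior Q.toSet ∩ interior S.toSet = ∅
  CW : ℝ
  one_le_CW : 1 ≤ CW
  dist_lb : ∀ Q ∈ cubes, CW * Q.side ≤ setDist Q.toSet (frontier Ω)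
  dist_ub : ∀ Q ∈ cubes, setDist Q.toSet (frontier Ω) ≤ 4 * CW * Q.side
  finiteOverlap : ∃ N : ℕ, ∀ x : Fin d → ℝ,
    {Q ∈ cubes | x ∈ Metric.closedBall Q.center (25 * Q.side)}.Finite ∧
    {Q ∈ cubes | x ∈ Metric.closedBall Q.center (25 * Q.side)}.ncard ≤ N

/-- `S ∈ SH_ρ(P)` : the cube `S` of the covering lies in the `ρ`-shadow of `P`, i.e.
`S ⊆ B(x_P, ρ ℓ(P))`. -/
def memShadow {d : ℕ} {Ω : Set (Fin d → ℝ)} (W : WhitneyCovering d Ω) (ρ : ℝ)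
    (S P : Cube d) : Prop :=
  S ∈ W.cubes ∧ P ∈ W.cubes ∧ S.toSet ⊆ Metric.closedBall P.center (ρ * P.side)

/-- An `ε`-admissible chain of Whitney cubes joining `Q` to `S`. -/
structure AdmissibleChain {d : ℕ} {Ω : Set (Fin d → ℝ)} (W : WhitneyCovering d Ω)
    (ε : ℝ) (Q S : Cube d) where
  M : ℕ
  M_pos : 0 < M
  c : Fin M → Cube d
  mem : ∀ j, c j ∈ W.cubes
  first : c ⟨0, M_pos⟩ = Q
  last : c ⟨M - 1, Nat.sub_lt M_pos Nat.one_pos⟩ = S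
  neighbors : ∀ (j : ℕ) (h : j + 1 < M),
    ((c ⟨j, Nat.lt_of_succ_lt h⟩).toSet ∩ (c ⟨j + 1, h⟩).toSet).Nonempty
  length_le : ∑ j, (c j).side ≤ ε⁻¹ * longDist Q S
  j₀ : Fin M
  growth₁ : ∀ j : Fin M, j ≤ j₀ → ε * longDist Q (c j) ≤ (c j).side
  growth₂ : ∀ j : Fin M, j₀ ≤ j → ε * longDist (c j) S ≤ (c j).side

/-- `Ω` (with Whitney covering `W`) is an `ε`-uniform domain: any two Whitney cubes are
joined by an `ε`-admissible chain. -/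
def IsUniformDomain {d : ℕ} {Ω : Set (Fin d → ℝ)} (W : WhitneyCovering d Ω) (ε : ℝ) : Prop :=
  ∀ Q ∈ W.cubes, ∀ S ∈ W.cubes, Nonempty (AdmissibleChain W ε Q S)

/-- The non-centered Hardy–Littlewood maximal function, taken over cubes
(closed balls in the sup metric on `Fin d → ℝ`) containing `x`. -/
noncomputable def maximal (d : ℕ) (g : (Fin d → ℝ) → ℝ≥0∞) (x : Fin d → ℝ) : ℝ≥0∞ :=
  ⨆ (c : Fin d → ℝ) (r : ℝ) (_ : 0 < r) (_ : x ∈ Metric.closedBall c r),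
    (∫⁻ y in Metric.closedBall c r, g y) / volume (Metric.closedBall c r)

/-- The realization `Sh_ρ(P)` of the `ρ`-shadow of `P`: the union of the Whitney cubes that
lie in the shadow of `P`. -/
def shadowSet {d : ℕ} {Ω : Set (Fin d → ℝ)} (W : WhitneyCovering d Ω) (ρ : ℝ)
    (P : Cube d) : Set (Fin d → ℝ) :=
  ⋃ S ∈ {S : Cube d | memShadow W ρ S P}, S.toSet

/-!
The lower bound holds because every shadow lies in `Ω` and the Whitney cubes are a.e. disjoint.
For the upper bound fix `x` in a Whitney cube `Q` and another cube `S`. If `S` lies in the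
shadow of `Q` there is nothing to prove. Otherwise `|x - y| ≳ D(Q, S)` for `y ∈ S`, and the
peak cube `R` of an admissible chain from `Q` to `S` has `Q` and `S` in its shadow and lies
within `≲ |x - y|` of both. Passing through an intermediate point `z ∈ R` and averaging over `z`
bounds the quotient at `(x, y)` by the mean over `R` of the shadow supremum. Summing over `Q`,
each `R` is charged only by cubes inside the ball of radius `ε⁻¹ ℓ(R)` around it, whose total
volume is `≲ |R|`.
-/

section

open Metric Set Function

variable {d : ℕ}

namespace Cube

lemma center_mem (Q : Cube d) : Q.center ∈ Q.toSet :=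
  mem_closedBall_self (by linarith [Q.side_pos])

lemma toSet_nonempty (Q : Cube d) : Q.toSet.Nonempty := ⟨Q.center, Q.center_mem⟩

lemma measurableSet_toSet (Q : Cube d) : MeasurableSet Q.toSet := measurableSet_closedBall

lemma dist_le_side (Q : Cube d) {x y : Fin d → ℝ} (hx : x ∈ Q.toSet) (hy : y ∈ Q.toSet) :
    dist x y ≤ Q.side := by
  have := dist_triangle_right x y Q.center
  linarith [mem_closedBall.mp hx, mem_closedBall.mp hy]

lemma volume_toSet (Q : Cube d) : volume Q.toSet = ENNReal.ofReal (Q.side ^ d) := by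
  rw [toSet, Real.volume_pi_closedBall _ (by linarith [Q.side_pos]), Fintype.card_fin]
  ring_nf

lemma volume_toSet_ne_zero (Q : Cube d) : volume Q.toSet ≠ 0 := by
  rw [volume_toSet, Ne, ENNReal.ofReal_eq_zero, not_le]
  exact pow_pos Q.side_pos d

lemma volume_toSet_ne_top (Q : Cube d) : volume Q.toSet ≠ ⊤ := by
  rw [volume_toSet]
  exact ENNReal.ofReal_ne_top

lemma interior_toSet_ae_eq (Q : Cube d) : interior Q.toSet =ᵐ[volume] Q.toSet :=
  interior_ae_eq_of_null_frontier ((convex_closedBall _ _).addHaar_frontier volume)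

end Cube

lemma setDist_le_dist {A B : Set (Fin d → ℝ)} {a b : Fin d → ℝ} (ha : a ∈ A) (hb : b ∈ B) :
    setDist A B ≤ dist a b :=
  csInf_le ⟨0, by rintro _ ⟨a', _, b', _, rfl⟩; exact dist_nonneg⟩ (mem_image2_of_mem ha hb)

lemma exists_dist_lt_setDist_add {A B : Set (Fin d → ℝ)} (hA : A.Nonempty) (hB : B.Nonempty)
    {δ : ℝ} (hδ : 0 < δ) : ∃ a ∈ A, ∃ b ∈ B, dist a b < setDist A B + δ := by
  obtain ⟨_, ⟨a, ha, b, hb, rfl⟩, hlt⟩ := Real.lt_sInf_add_pos (hA.image2 (f := dist) hB) hδ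
  exact ⟨a, ha, b, hb, hlt⟩

lemma setDist_comm (A B : Set (Fin d → ℝ)) : setDist A B = setDist B A := by
  rw [setDist, setDist, ← image2_swap]
  simp only [dist_comm]

lemma longDist_comm (Q S : Cube d) : longDist Q S = longDist S Q := by
  rw [longDist, longDist, setDist_comm]
  ring

lemma longDist_le_add_dist {Q S : Cube d} {x y : Fin d → ℝ} (hx : x ∈ Q.toSet)
    (hy : y ∈ S.toSet) : longDist Q S ≤ Q.side + S.side + dist x y := by
  unfold longDist
  linarith [setDist_le_dist hx hy]

lemma toSet_subset_closedBall_of_longDist_le {Q R : Cube d} {K : ℝ}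
    (h : longDist Q R ≤ K * R.side) : Q.toSet ⊆ closedBall R.center (K * R.side) := by
  intro w hw
  rw [mem_closedBall]
  refine le_of_forall_pos_le_add fun δ hδ => ?_
  obtain ⟨q, hq, r, hr, hqr⟩ :=
    exists_dist_lt_setDist_add Q.toSet_nonempty R.toSet_nonempty hδ
  have := dist_triangle4 w q r R.center
  have hr' : dist r R.center ≤ R.side / 2 := mem_closedBall.mp hr
  unfold longDist at h
  linarith [Q.dist_le_side hw hq, R.side_pos]

namespace WhitneyCovering

variable {Ω : Set (Fin d → ℝ)} (W : WhitneyCovering d Ω)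

lemma toSet_subset {Q : Cube d} (hQ : Q ∈ W.cubes) : Q.toSet ⊆ Ω :=
  W.covers ▸ subset_biUnion_of_mem hQ

lemma iUnion_toSet : ⋃ Q : W.cubes, Q.1.toSet = Ω :=
  (biUnion_eq_iUnion W.cubes fun Q _ => Q.toSet).symm.trans W.covers

lemma pairwise_disjoint_interior :
    Pairwise (Disjoint on fun Q : W.cubes => interior Q.1.toSet) := fun Q S hQS =>
  disjoint_iff_inter_eq_empty.mpr (W.essDisjoint Q Q.2 S S.2 (Subtype.coe_ne_coe.mpr hQS))

lemma pairwise_aedisjoint :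
    Pairwise (AEDisjoint volume on fun Q : W.cubes => Q.1.toSet) := fun Q S hQS =>
  (W.pairwise_disjoint_interior hQS).aedisjoint.congr
    Q.1.interior_toSet_ae_eq.symm S.1.interior_toSet_ae_eq.symm

instance countable_cubes : Countable W.cubes := by
  refine (Set.countable_coe_iff.mpr ?_)
  refine PairwiseDisjoint.countable_of_isOpen (s := fun Q : Cube d => interior Q.toSet)
    (fun Q hQ S hS hQS => ?_) (fun _ _ => isOpen_interior) (fun Q _ => ?_)
  · exact W.pairwise_disjoint_interior (i := ⟨Q, hQ⟩) (j := ⟨S, hS⟩) (by simpa using hQS)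
  · exact ⟨Q.center, ball_subset_interior_closedBall (mem_ball_self (half_pos Q.side_pos))⟩

lemma lintegral_eq_tsum (g : (Fin d → ℝ) → ℝ≥0∞) :
    ∫⁻ x in Ω, g x = ∑' Q : W.cubes, ∫⁻ x in Q.1.toSet, g x := by
  rw [← lintegral_iUnion₀ (fun Q => Q.1.measurableSet_toSet.nullMeasurableSet)
    W.pairwise_aedisjoint, W.iUnion_toSet]

lemma essSup_le_of_forall {g : (Fin d → ℝ) → ℝ≥0∞} {c : ℝ≥0∞}
    (h : ∀ Q : W.cubes, essSup g (volume.restrict Q.1.toSet) ≤ c) :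
    essSup g (volume.restrict Ω) ≤ c := by
  refine essSup_le_of_ae_le c ?_
  rw [← W.iUnion_toSet, Filter.EventuallyLE, ae_restrict_iUnion_iff]
  exact fun Q => (ENNReal.ae_le_essSup g).mono fun x hx => hx.trans (h Q)

lemma side_le_five_mul_side_add_dist {Q S : Cube d} (hQ : Q ∈ W.cubes) (hS : S ∈ W.cubes)
    (hfr : (frontier Ω).Nonempty) {x y : Fin d → ℝ} (hx : x ∈ Q.toSet) (hy : y ∈ S.toSet) :
    S.side ≤ 5 * Q.side + dist x y := by
  have hCW := W.one_le_CW
  refine le_of_forall_pos_le_add fun δ hδ => ?_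
  obtain ⟨q, hq, w, hw, hqw⟩ :=
    exists_dist_lt_setDist_add Q.toSet_nonempty hfr (mul_pos (by linarith : (0 : ℝ) < W.CW) hδ)
  have hS_near : W.CW * S.side ≤ dist y x + dist x q + dist q w :=
    (W.dist_lb S hS).trans ((setDist_le_dist hy hw).trans (dist_triangle4 _ _ _ _))
  have hQ_far : dist q w < 4 * W.CW * Q.side + W.CW * δ := by linarith [W.dist_ub Q hQ]
  have hxq := Q.dist_le_side hx hq
  rw [dist_comm] at hS_near
  nlinarith [Q.side_pos, dist_nonneg (x := x) (y := y)]

lemma tsum_volume_le_of_longDist_le {K : ℝ} (hK : 0 ≤ K) (R : Cube d) :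
    ∑' Q : W.cubes, (if longDist Q R ≤ K * R.side then volume Q.1.toSet else 0) ≤
      ENNReal.ofReal ((2 * K) ^ d) * volume R.toSet := by
  let near : Set W.cubes := {Q | longDist Q R ≤ K * R.side}
  calc ∑' Q : W.cubes, (if longDist Q R ≤ K * R.side then volume Q.1.toSet else 0)
      = ∑' Q : near, volume Q.1.1.toSet := by
        rw [tsum_subtype near fun Q : W.cubes => volume Q.1.toSet]
        rfl
    _ ≤ volume (⋃ Q : near, Q.1.1.toSet) :=
        tsum_meas_le_meas_iUnion_of_disjoint₀ _
          (fun Q => Q.1.1.measurableSet_toSet.nullMeasurableSet)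
          fun Q S hQS => W.pairwise_aedisjoint (Subtype.coe_ne_coe.mpr hQS)
    _ ≤ volume (closedBall R.center (K * R.side)) :=
        measure_mono (iUnion_subset fun Q => toSet_subset_closedBall_of_longDist_le Q.2)
    _ = ENNReal.ofReal ((2 * K) ^ d) * volume R.toSet := by
        rw [Real.volume_pi_closedBall _ (mul_nonneg hK R.side_pos.le), R.volume_toSet,
          ← ENNReal.ofReal_mul (by positivity), Fintype.card_fin]
        ring_nf

lemma tsum_volume_mul_tsum_le {K : ℝ} (hK : 0 ≤ K) (a : Cube d → ℝ≥0∞) :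
    ∑' Q : W.cubes, volume Q.1.toSet *
        ∑' R : W.cubes, (if longDist Q.1 R.1 ≤ K * R.1.side then a R.1 / volume R.1.toSet else 0) ≤
      ENNReal.ofReal ((2 * K) ^ d) * ∑' R : W.cubes, a R.1 := by
  calc ∑' Q : W.cubes, volume Q.1.toSet *
        ∑' R : W.cubes, (if longDist Q.1 R.1 ≤ K * R.1.side then a R.1 / volume R.1.toSet else 0)
      = ∑' (R : W.cubes) (Q : W.cubes), a R.1 / volume R.1.toSet *
          (if longDist Q.1 R.1 ≤ K * R.1.side then volume Q.1.toSet else 0) := by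
        simp_rw [← ENNReal.tsum_mul_left]
        rw [ENNReal.tsum_comm]
        refine tsum_congr fun R => tsum_congr fun Q => ?_
        split_ifs <;> simp [mul_comm]
    _ ≤ ∑' R : W.cubes, a R.1 / volume R.1.toSet *
          (ENNReal.ofReal ((2 * K) ^ d) * volume R.1.toSet) := by
        gcongr with R
        rw [ENNReal.tsum_mul_left]
        gcongr
        exact W.tsum_volume_le_of_longDist_le hK R
    _ = ENNReal.ofReal ((2 * K) ^ d) * ∑' R : W.cubes, a R.1 := by
        rw [← ENNReal.tsum_mul_left]
        refine tsum_congr fun R => ?_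
        rw [mul_left_comm, ENNReal.div_mul_cancel R.1.volume_toSet_ne_zero
          R.1.volume_toSet_ne_top]

end WhitneyCovering

section Shadow

variable {Ω : Set (Fin d → ℝ)} {W : WhitneyCovering d Ω}

lemma shadowSet_subset (W : WhitneyCovering d Ω) (ρ : ℝ) (P : Cube d) : shadowSet W ρ P ⊆ Ω :=
  iUnion₂_subset fun _ hS => W.toSet_subset hS.1

lemma toSet_subset_shadowSet {ρ : ℝ} {S P : Cube d} (h : memShadow W ρ S P) :
    S.toSet ⊆ shadowSet W ρ P :=
  subset_biUnion_of_mem (u := fun S : Cube d => S.toSet) h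

lemma WhitneyCovering.longDist_le_of_not_subset {ρ : ℝ} (hρ : 9 ≤ ρ) {Q S : Cube d}
    (hQ : Q ∈ W.cubes) (hS : S ∈ W.cubes) (hfr : (frontier Ω).Nonempty)
    (hfar : ¬ S.toSet ⊆ closedBall Q.center (ρ * Q.side)) {x y : Fin d → ℝ}
    (hx : x ∈ Q.toSet) (hy : y ∈ S.toSet) : longDist Q S ≤ 8 * dist x y := by
  have hD := longDist_le_add_dist hx hy
  have hsize := W.side_le_five_mul_side_add_dist hQ hS hfr hx hy
  have hQpos := Q.side_pos
  -- A large `S` is controlled by the Whitney size bound alone; a small one that leaves the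
  -- ball around `Q` forces `|x - y| > 5 ℓ(Q) / 2`.
  by_cases hbig : 6 * Q.side ≤ S.side
  · linarith
  obtain ⟨w, hwS, hwB⟩ := not_subset.mp hfar
  have hw : ρ * Q.side < dist w Q.center := not_le.mp hwB
  have := dist_triangle4 w y x Q.center
  have hxc : dist x Q.center ≤ Q.side / 2 := mem_closedBall.mp hx
  rw [dist_comm y x] at this
  nlinarith [S.dist_le_side hwS hy]

lemma IsUniformDomain.exists_peak {ε : ℝ} (hU : IsUniformDomain W ε) {Q S : Cube d}
    (hQ : Q ∈ W.cubes) (hS : S ∈ W.cubes) :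
    ∃ R ∈ W.cubes, ε * longDist Q R ≤ R.side ∧ ε * longDist R S ≤ R.side ∧
      R.side ≤ ε⁻¹ * longDist Q S := by
  obtain ⟨ch⟩ := hU Q hQ S hS
  refine ⟨ch.c ch.j₀, ch.mem _, ch.growth₁ _ le_rfl, ch.growth₂ _ le_rfl, ?_⟩
  calc (ch.c ch.j₀).side ≤ ∑ j, (ch.c j).side :=
        Finset.single_le_sum (fun j _ => (ch.c j).side_pos.le) (Finset.mem_univ _)
    _ ≤ ε⁻¹ * longDist Q S := ch.length_le

lemma IsUniformDomain.exists_shadow_of_not_subset {ε ρ : ℝ} (hU : IsUniformDomain W ε)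
    (hε : 0 < ε) (hρε : ε⁻¹ ≤ ρ) (hρ : 9 ≤ ρ) (hfr : (frontier Ω).Nonempty) {Q S : Cube d}
    (hQ : Q ∈ W.cubes) (hS : S ∈ W.cubes)
    (hfar : ¬ S.toSet ⊆ closedBall Q.center (ρ * Q.side)) :
    ∃ R ∈ W.cubes, longDist Q R ≤ ε⁻¹ * R.side ∧
      Q.toSet ⊆ shadowSet W ρ R ∧ S.toSet ⊆ shadowSet W ρ R ∧
      ∀ z ∈ R.toSet, ∀ x ∈ Q.toSet, ∀ y ∈ S.toSet,
        dist z x ≤ 8 * ε⁻¹ * (ε⁻¹ + 1) * dist x y ∧ dist z y ≤ 8 * ε⁻¹ * (ε⁻¹ + 1) * dist x y := by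
  obtain ⟨R, hR, hQR, hRS, hRside⟩ := hU.exists_peak hQ hS
  have hQR' : longDist Q R ≤ ε⁻¹ * R.side := by
    rw [inv_mul_eq_div, le_div_iff₀ hε, mul_comm]; exact hQR
  have hSR' : longDist S R ≤ ε⁻¹ * R.side := by
    rw [longDist_comm, inv_mul_eq_div, le_div_iff₀ hε, mul_comm]; exact hRS
  have hball := closedBall_subset_closedBall (x := R.center)
    (mul_le_mul_of_nonneg_right hρε R.side_pos.le)
  have hQball := toSet_subset_closedBall_of_longDist_le hQR'
  have hSball := toSet_subset_closedBall_of_longDist_le hSR'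
  have hnear : ∀ z ∈ R.toSet, ∀ x ∈ Q.toSet, ∀ y ∈ S.toSet,
      ∀ v ∈ closedBall R.center (ε⁻¹ * R.side), dist z v ≤ 8 * ε⁻¹ * (ε⁻¹ + 1) * dist x y := by
    intro z hz x hx y hy v hv
    have hzc : dist z R.center ≤ R.side / 2 := mem_closedBall.mp hz
    have hvc : dist v R.center ≤ ε⁻¹ * R.side := mem_closedBall.mp hv
    have hRxy : R.side ≤ ε⁻¹ * (8 * dist x y) := hRside.trans
      (mul_le_mul_of_nonneg_left
        (W.longDist_le_of_not_subset hρ hQ hS hfr hfar hx hy) (inv_pos.mpr hε).le)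
    have := dist_triangle_right z v R.center
    nlinarith [inv_pos.mpr hε, R.side_pos]
  exact ⟨R, hR, hQR', toSet_subset_shadowSet ⟨hQ, hR, hQball.trans hball⟩,
    toSet_subset_shadowSet ⟨hS, hR, hSball.trans hball⟩, fun z hz x hx y hy =>
      ⟨hnear z hz x hx y hy x (hQball hx), hnear z hz x hx y hy y (hSball hy)⟩⟩

end Shadow

section DiffQuot

variable {X E : Type*} [MetricSpace X] [SeminormedAddCommGroup E]

noncomputable def diffQuot (f : X → E) (s p : ℝ) (x y : X) : ℝ≥0∞ :=
  (‖f x - f y‖₊ : ℝ≥0∞) ^ p / edist x y ^ (s * p)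

lemma diffQuot_eq (f : X → E) (s p : ℝ) (x y : X) :
    diffQuot f s p x y = edist (f x) (f y) ^ p / edist x y ^ (s * p) := by
  rw [diffQuot, edist_eq_enorm_sub, enorm_eq_nnnorm]

lemma edist_rpow_le_of_diffQuot_le {f : X → E} {s p : ℝ} (hs : 0 ≤ s) (hp : 0 < p)
    {x y : X} {c : ℝ≥0∞} (h : diffQuot f s p x y ≤ c) :
    edist (f x) (f y) ^ p ≤ c * edist x y ^ (s * p) := by
  rcases eq_or_ne x y with rfl | hxy
  · simp [ENNReal.zero_rpow_of_pos hp]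
  rw [diffQuot_eq] at h
  refine (ENNReal.div_le_iff_le_mul (Or.inl ?_) (Or.inl ?_)).mp h
  · exact (ENNReal.rpow_pos (edist_pos.mpr hxy) (edist_ne_top x y)).ne'
  · exact ENNReal.rpow_ne_top_of_nonneg (mul_nonneg hs hp.le) (edist_ne_top x y)

lemma diffQuot_le_of_dist_le {f : X → E} {s p K : ℝ} (hs : 0 ≤ s) (hp : 1 ≤ p) {x y z : X}
    {c : ℝ≥0∞} (hx : edist (f z) (f x) ^ p ≤ c * edist z x ^ (s * p))
    (hy : edist (f z) (f y) ^ p ≤ c * edist z y ^ (s * p))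
    (hzx : dist z x ≤ K * dist x y) (hzy : dist z y ≤ K * dist x y) :
    diffQuot f s p x y ≤ 2 ^ p * ENNReal.ofReal K ^ (s * p) * c := by
  have hsp : 0 ≤ s * p := mul_nonneg hs (zero_le_one.trans hp)
  have hK : ∀ v, dist z v ≤ K * dist x y →
      edist z v ^ (s * p) ≤ ENNReal.ofReal K ^ (s * p) * edist x y ^ (s * p) := by
    intro v hv
    rw [← ENNReal.mul_rpow_of_nonneg _ _ hsp, edist_dist, edist_dist,
      ← ENNReal.ofReal_mul' dist_nonneg]
    exact ENNReal.rpow_le_rpow (ENNReal.ofReal_le_ofReal hv) hsp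
  rw [diffQuot_eq]
  refine ENNReal.div_le_of_le_mul ?_
  calc edist (f x) (f y) ^ p
      ≤ (edist (f z) (f x) + edist (f z) (f y)) ^ p :=
        ENNReal.rpow_le_rpow (edist_triangle_left _ _ _) (zero_le_one.trans hp)
    _ ≤ 2 ^ (p - 1) * (edist (f z) (f x) ^ p + edist (f z) (f y) ^ p) :=
        ENNReal.rpow_add_le_mul_rpow_add_rpow _ _ hp
    _ ≤ 2 ^ (p - 1) * (c * (ENNReal.ofReal K ^ (s * p) * edist x y ^ (s * p)) +
          c * (ENNReal.ofReal K ^ (s * p) * edist x y ^ (s * p))) := by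
        gcongr
        · exact hx.trans (by gcongr; exact hK x hzx)
        · exact hy.trans (by gcongr; exact hK y hzy)
    _ = 2 ^ p * ENNReal.ofReal K ^ (s * p) * c * edist x y ^ (s * p) := by
        have h2 : (2 : ℝ≥0∞) ^ (p - 1) * 2 = 2 ^ p := by
          conv_rhs => rw [← sub_add_cancel p 1, ENNReal.rpow_add _ _ two_ne_zero
            ENNReal.ofNat_ne_top, ENNReal.rpow_one]
        rw [← two_mul, ← mul_assoc, h2]
        ring

end DiffQuot

section Average

variable {X E : Type*} [MetricSpace X] [SeminormedAddCommGroup E] [MeasurableSpace X]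

/-- The bound `|f z - f x|^p ≤ G(z) |z - x|^{sp}`, with `G` the shadow supremum at `z`, only holds
off a `z`-dependent null set of `x`; so it is first proved for the essential supremum over
`A × B`, which does not depend on `z` and can then be averaged over `Z`. -/
lemma ae_essSup_diffQuot_le_average (μ : Measure X) [SFinite μ] (f : X → E) {s p K : ℝ}
    (hs : 0 ≤ s) (hp : 1 ≤ p) {A B U Z : Set X} (hA : MeasurableSet A) (hB : MeasurableSet B)
    (hAU : A ⊆ U) (hBU : B ⊆ U) (hZ : MeasurableSet Z) (hZ0 : μ Z ≠ 0) (hZtop : μ Z ≠ ⊤)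
    (hK : ∀ z ∈ Z, ∀ x ∈ A, ∀ y ∈ B, dist z x ≤ K * dist x y ∧ dist z y ≤ K * dist x y) :
    ∀ᵐ x ∂μ.restrict A, essSup (diffQuot f s p x) (μ.restrict B) ≤
      2 ^ p * ENNReal.ofReal K ^ (s * p) *
        ((∫⁻ z in Z, essSup (diffQuot f s p z) (μ.restrict U) ∂μ) / μ Z) := by
  set G : X → ℝ≥0∞ := fun z => essSup (diffQuot f s p z) (μ.restrict U)
  set κ : ℝ≥0∞ := 2 ^ p * ENNReal.ofReal K ^ (s * p)
  set ν := (μ.restrict A).prod (μ.restrict B)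
  set M := essSup (fun w : X × X => diffQuot f s p w.1 w.2) ν
  have hp0 : 0 < p := zero_lt_one.trans_le hp
  have hG : ∀ z, ∀ᵐ y ∂μ.restrict U, edist (f z) (f y) ^ p ≤ G z * edist z y ^ (s * p) :=
    fun z => (ENNReal.ae_le_essSup _).mono fun y hy => edist_rpow_le_of_diffQuot_le hs hp0 hy
  have hpair : ∀ z ∈ Z, M ≤ κ * G z := by
    intro z hz
    have hx : ∀ᵐ w ∂ν, w.1 ∈ A ∧ edist (f z) (f w.1) ^ p ≤ G z * edist z w.1 ^ (s * p) :=
      Measure.quasiMeasurePreserving_fst.ae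
        ((ae_restrict_mem hA).and (ae_restrict_of_ae_restrict_of_subset hAU (hG z)))
    have hy : ∀ᵐ w ∂ν, w.2 ∈ B ∧ edist (f z) (f w.2) ^ p ≤ G z * edist z w.2 ^ (s * p) :=
      Measure.quasiMeasurePreserving_snd.ae
        ((ae_restrict_mem hB).and (ae_restrict_of_ae_restrict_of_subset hBU (hG z)))
    refine essSup_le_of_ae_le _ ((hx.and hy).mono fun w ⟨⟨hxA, hzx⟩, hyB, hzy⟩ => ?_)
    obtain ⟨hdx, hdy⟩ := hK z hz _ hxA _ hyB
    exact diffQuot_le_of_dist_le hs hp hzx hzy hdx hdy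
  have hκ : κ ≠ ⊤ := ENNReal.mul_ne_top
    (ENNReal.rpow_ne_top_of_nonneg hp0.le ENNReal.ofNat_ne_top)
    (ENNReal.rpow_ne_top_of_nonneg (mul_nonneg hs hp0.le) ENNReal.ofReal_ne_top)
  have hM : M ≤ κ * ((∫⁻ z in Z, G z ∂μ) / μ Z) := by
    rw [← mul_div_assoc, ENNReal.le_div_iff_mul_le (Or.inl hZ0) (Or.inl hZtop)]
    calc M * μ Z = ∫⁻ _ in Z, M ∂μ := (setLIntegral_const Z M).symm
      _ ≤ ∫⁻ z in Z, κ * G z ∂μ := setLIntegral_mono' hZ hpair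
      _ = κ * ∫⁻ z in Z, G z ∂μ := lintegral_const_mul' κ G hκ
  filter_upwards [Measure.ae_ae_of_ae_prod (ENNReal.ae_le_essSup _ : ∀ᵐ w ∂ν, _ ≤ M)]
    with x hx
  exact (essSup_le_of_ae_le _ hx).trans hM

end Average

noncomputable def shadowEnergy {Ω : Set (Fin d → ℝ)} (W : WhitneyCovering d Ω)
    (f : (Fin d → ℝ) → ℝ) (s p ρ : ℝ) (R : Cube d) : ℝ≥0∞ :=
  ∫⁻ x in R.toSet, essSup (diffQuot f s p x) (volume.restrict (shadowSet W ρ R))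

section Domain

variable {Ω : Set (Fin d → ℝ)} (W : WhitneyCovering d Ω) (f : (Fin d → ℝ) → ℝ)

lemma WhitneyCovering.tsum_shadowEnergy_le (s p ρ : ℝ) :
    ∑' Q : W.cubes, shadowEnergy W f s p ρ Q ≤
      ∫⁻ x in Ω, essSup (diffQuot f s p x) (volume.restrict Ω) := by
  rw [W.lintegral_eq_tsum]
  refine ENNReal.tsum_le_tsum fun Q => lintegral_mono fun x => ?_
  exact essSup_mono_measure' (Measure.restrict_mono (shadowSet_subset W ρ Q) le_rfl)

variable {W} {s p ε ρ : ℝ}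

lemma IsUniformDomain.ae_essSup_diffQuot_le (hU : IsUniformDomain W ε) (hε : 0 < ε)
    (hρε : ε⁻¹ ≤ ρ) (hρ : 9 ≤ ρ) (hfr : (frontier Ω).Nonempty) (hs : 0 ≤ s) (hp : 1 ≤ p)
    {Q : Cube d} (hQ : Q ∈ W.cubes) :
    ∀ᵐ x ∂volume.restrict Q.toSet, essSup (diffQuot f s p x) (volume.restrict Ω) ≤
      essSup (diffQuot f s p x) (volume.restrict (shadowSet W ρ Q)) +
        2 ^ p * ENNReal.ofReal (8 * ε⁻¹ * (ε⁻¹ + 1)) ^ (s * p) *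
          ∑' R : W.cubes, (if longDist Q R.1 ≤ ε⁻¹ * R.1.side then
            shadowEnergy W f s p ρ R / volume R.1.toSet else 0) := by
  refine (ae_all_iff.mpr fun S : W.cubes => ?_).mono fun x hx => W.essSup_le_of_forall hx
  by_cases hnear : S.1.toSet ⊆ closedBall Q.center (ρ * Q.side)
  · refine ae_of_all _ fun x => le_add_right ?_
    exact essSup_mono_measure'
      (Measure.restrict_mono (toSet_subset_shadowSet ⟨S.2, hQ, hnear⟩) le_rfl)
  obtain ⟨R, hR, hQR, hQsh, hSsh, hK⟩ :=
    hU.exists_shadow_of_not_subset hε hρε hρ hfr hQ S.2 hnear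
  filter_upwards [ae_essSup_diffQuot_le_average volume f hs hp Q.measurableSet_toSet
    S.1.measurableSet_toSet hQsh hSsh R.measurableSet_toSet R.volume_toSet_ne_zero
    R.volume_toSet_ne_top hK] with x hx
  refine hx.trans (le_add_left ?_)
  gcongr
  refine le_trans ?_ (ENNReal.le_tsum ⟨R, hR⟩)
  rw [if_pos hQR]
  rfl

lemma IsUniformDomain.lintegral_essSup_diffQuot_le (hU : IsUniformDomain W ε) (hε : 0 < ε)
    (hρε : ε⁻¹ ≤ ρ) (hρ : 9 ≤ ρ) (hfr : (frontier Ω).Nonempty) (hs : 0 ≤ s) (hp : 1 ≤ p) :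
    ∫⁻ x in Ω, essSup (diffQuot f s p x) (volume.restrict Ω) ≤
      (1 + 2 ^ p * ENNReal.ofReal (8 * ε⁻¹ * (ε⁻¹ + 1)) ^ (s * p) *
          ENNReal.ofReal ((2 * ε⁻¹) ^ d)) *
        ∑' Q : W.cubes, shadowEnergy W f s p ρ Q := by
  set κ : ℝ≥0∞ := 2 ^ p * ENNReal.ofReal (8 * ε⁻¹ * (ε⁻¹ + 1)) ^ (s * p)
  set T := ∑' Q : W.cubes, shadowEnergy W f s p ρ Q
  set B : Cube d → ℝ≥0∞ := fun Q => ∑' R : W.cubes, (if longDist Q R.1 ≤ ε⁻¹ * R.1.side then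
    shadowEnergy W f s p ρ R / volume R.1.toSet else 0)
  calc ∫⁻ x in Ω, essSup (diffQuot f s p x) (volume.restrict Ω)
      = ∑' Q : W.cubes, ∫⁻ x in Q.1.toSet, essSup (diffQuot f s p x) (volume.restrict Ω) :=
        W.lintegral_eq_tsum _
    _ ≤ ∑' Q : W.cubes, ∫⁻ x in Q.1.toSet,
          (essSup (diffQuot f s p x) (volume.restrict (shadowSet W ρ Q)) + κ * B Q) :=
        ENNReal.tsum_le_tsum fun Q =>
          lintegral_mono_ae (hU.ae_essSup_diffQuot_le f hε hρε hρ hfr hs hp Q.2)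
    _ = T + κ * ∑' Q : W.cubes, volume Q.1.toSet * B Q := by
        rw [← ENNReal.tsum_mul_left, ← ENNReal.tsum_add]
        refine tsum_congr fun Q => ?_
        rw [lintegral_add_right _ measurable_const, setLIntegral_const, shadowEnergy]
        ring
    _ ≤ T + κ * (ENNReal.ofReal ((2 * ε⁻¹) ^ d) * T) := by
        gcongr
        exact W.tsum_volume_mul_tsum_le (inv_pos.mpr hε).le _
    _ = (1 + κ * ENNReal.ofReal ((2 * ε⁻¹) ^ d)) * T := by ring

end Domain

end

theorem stmt_15_general (d : ℕ) (ε s p : ℝ) (hε : 0 < ε) (hs0 : 0 < s)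
    (hp : 1 ≤ p) :
    ∃ ρ : ℝ, 1 < ρ ∧ ∃ C : ℝ≥0∞, C ≠ 0 ∧ C ≠ ⊤ ∧
      ∀ (Ω : Set (Fin d → ℝ)), IsOpen Ω → IsConnected Ω → Ω ≠ Set.univ →
      ∀ (W : WhitneyCovering d Ω), IsUniformDomain W ε →
      ∀ f : (Fin d → ℝ) → ℝ, MeasureTheory.LocallyIntegrableOn f Ω volume →
      ((∑' Q : {Q : Cube d // Q ∈ W.cubes},
          ∫⁻ x in (Q : Cube d).toSet,
            essSup (fun y => (‖f x - f y‖₊ : ℝ≥0∞) ^ p / edist x y ^ (s * p))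
              (volume.restrict (shadowSet W ρ (Q : Cube d)))) ^ (1 / p) ≤
        C * (∫⁻ x in Ω,
            essSup (fun y => (‖f x - f y‖₊ : ℝ≥0∞) ^ p / edist x y ^ (s * p))
              (volume.restrict Ω)) ^ (1 / p)) ∧
      ((∫⁻ x in Ω,
            essSup (fun y => (‖f x - f y‖₊ : ℝ≥0∞) ^ p / edist x y ^ (s * p))
              (volume.restrict Ω)) ^ (1 / p) ≤
        C * (∑' Q : {Q : Cube d // Q ∈ W.cubes},
          ∫⁻ x in (Q : Cube d).toSet,
            essSup (fun y => (‖f x - f y‖₊ : ℝ≥0∞) ^ p / edist x y ^ (s * p))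
              (volume.restrict (shadowSet W ρ (Q : Cube d)))) ^ (1 / p)) := by
  set C : ℝ≥0∞ := 1 + 2 ^ p * ENNReal.ofReal (8 * ε⁻¹ * (ε⁻¹ + 1)) ^ (s * p) *
    ENNReal.ofReal ((2 * ε⁻¹) ^ d)
  have hr : 0 < 1 / p := one_div_pos.mpr (by linarith)
  have hC : 1 ≤ C ^ (1 / p) := ENNReal.one_le_rpow le_self_add hr
  have hCtop : C ≠ ⊤ := by
    refine ENNReal.add_ne_top.mpr ⟨ENNReal.one_ne_top, ENNReal.mul_ne_top (ENNReal.mul_ne_top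
      ?_ ?_) ENNReal.ofReal_ne_top⟩
    · exact ENNReal.rpow_ne_top_of_nonneg (by positivity) ENNReal.ofNat_ne_top
    · exact ENNReal.rpow_ne_top_of_nonneg (by positivity) ENNReal.ofReal_ne_top
  refine ⟨ε⁻¹ + 9, by linarith [inv_pos.mpr hε], C ^ (1 / p), (zero_lt_one.trans_le hC).ne',
    ENNReal.rpow_ne_top_of_nonneg hr.le hCtop, fun Ω _ hconn huniv W hU f _ => ?_⟩
  have hfr : (frontier Ω).Nonempty := nonempty_frontier_iff.mpr ⟨hconn.nonempty, huniv⟩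
  have hle := W.tsum_shadowEnergy_le f s p (ε⁻¹ + 9)
  have hge := hU.lintegral_essSup_diffQuot_le f (ρ := ε⁻¹ + 9) hε (by linarith)
    (by linarith [inv_pos.mpr hε]) hfr hs0.le hp
  exact ⟨(ENNReal.rpow_le_rpow hle hr.le).trans (le_mul_of_one_le_left' hC),
    (ENNReal.rpow_le_rpow hge hr.le).trans_eq (ENNReal.mul_rpow_of_nonneg _ _ hr.le)⟩

/-- `q = ∞` case of the shadow self-improvement: for a uniform domain `Ω`
with admissible Whitney covering `W`, `0 < s < 1`, `1 ≤ p < ∞` and `f ∈ L¹_loc(Ω)`,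
`(Σ_{Q∈W} ∫_Q ess sup_{y∈Sh(Q)} |f(x)−f(y)|^p/|x−y|^{sp} dx)^{1/p}` is comparable to
`(∫_Ω (ess sup_{y∈Ω} |f(x)−f(y)|/|x−y|^s)^p dx)^{1/p}`, where `Sh = Sh_{ρ_ε}` for a suitable
shadow parameter `ρ_ε > 1` depending only on `ε` and `d`. -/
theorem stmt_15 (d : ℕ) (hd : 1 ≤ d) (ε s p : ℝ) (hε : 0 < ε) (hs0 : 0 < s) (hs1 : s < 1)
    (hp : 1 ≤ p) :
    ∃ ρ : ℝ, 1 < ρ ∧ ∃ C : ℝ≥0∞, C ≠ 0 ∧ C ≠ ⊤ ∧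
      ∀ (Ω : Set (Fin d → ℝ)), IsOpen Ω → IsConnected Ω → Ω ≠ Set.univ →
      ∀ (W : WhitneyCovering d Ω), IsUniformDomain W ε →
      ∀ f : (Fin d → ℝ) → ℝ, MeasureTheory.LocallyIntegrableOn f Ω volume →
      ((∑' Q : {Q : Cube d // Q ∈ W.cubes},
          ∫⁻ x in (Q : Cube d).toSet,
            essSup (fun y => (‖f x - f y‖₊ : ℝ≥0∞) ^ p / edist x y ^ (s * p))
              (volume.restrict (shadowSet W ρ (Q : Cube d)))) ^ (1 / p) ≤
        C * (∫⁻ x in Ω,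
            essSup (fun y => (‖f x - f y‖₊ : ℝ≥0∞) ^ p / edist x y ^ (s * p))
              (volume.restrict Ω)) ^ (1 / p)) ∧
      ((∫⁻ x in Ω,
            essSup (fun y => (‖f x - f y‖₊ : ℝ≥0∞) ^ p / edist x y ^ (s * p))
              (volume.restrict Ω)) ^ (1 / p) ≤
        C * (∑' Q : {Q : Cube d // Q ∈ W.cubes},
          ∫⁻ x in (Q : Cube d).toSet,
            essSup (fun y => (‖f x - f y‖₊ : ℝ≥0∞) ^ p / edist x y ^ (s * p))
              (volume.restrict (shadowSet W ρ (Q : Cube d)))) ^ (1 / p)) :=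
  stmt_15_general d ε s p hε hs0 hp
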